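/- arXiv:0903.5135 — 3 statements merged into one kernel-verified Lean document; each statement's English description precedes it below -/
import Mathlib

section
/- For every n ≥ 1, the number of compositions of n+1 into positive parts avoiding a fixed set of substrings S₁,…,S_k (none contained in another, each of length at least 2) plus the number of compositions of n+1 quasi-avoiding some S_i equals the number of compositions of n avoiding all S_i (obtained by appending a part 1) plus the number of compositions of n avoiding or quasi-avoiding some S_i (obtained by incrementing the last part). Formally, the map sending a composition σ of n to σ with last part increased by 1, together with the map sending avoiding σ to σ·1, is a bijection from (A_n ∪ B¹_n ∪ ⋯ ∪ B^k_n) ⊔ A_n onto A_{n+1} ∪ B¹_{n+1} ∪ ⋯ ∪ B^k_{n+1}. -/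
/-- The prohibited string `T` occurs in `s` at position `p`. -/
def occursAt (T s : List ℕ) (p : ℕ) : Prop :=
  ∃ u v : List ℕ, s = u ++ T ++ v ∧ u.length = p

/-- `s` quasi-avoids `S i` (with respect to the family `S`): it ends with `S i`, and the
only occurrence of any prohibited string in `s` is this terminal occurrence of `S i`. -/
def QuasiAvoids {k : ℕ} (S : Fin k → List ℕ) (i : Fin k) (s : List ℕ) : Prop :=
  S i <:+ s ∧ ∀ j p, occursAt (S j) s p → S j = S i ∧ p + (S i).length = s.length

/-- Increase the last part of a composition by `1`. -/
def incLast (s : List ℕ) : List ℕ := s.dropLast ++ [s.getLastD 0 + 1]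

lemma occursAt_length {T s : List ℕ} {p : ℕ} (h : occursAt T s p) :
    p + T.length ≤ s.length := by
  obtain ⟨u, v, rfl, rfl⟩ := h
  simp only [List.length_append]
  omega

lemma infix_iff_occursAt {T s : List ℕ} : T <:+: s ↔ ∃ p, occursAt T s p := by
  constructor
  · rintro ⟨u, v, h⟩; exact ⟨u.length, u, v, h.symm, rfl⟩
  · rintro ⟨p, u, v, h, -⟩; exact ⟨u, v, h.symm⟩

lemma suffix_of_occursAt {T s : List ℕ} {p : ℕ} (h : occursAt T s p)
    (hp : p + T.length = s.length) : T <:+ s := by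
  obtain ⟨u, v, rfl, rfl⟩ := h
  have hv : v.length = 0 := by
    simp only [List.length_append] at hp; omega
  rw [List.length_eq_zero_iff] at hv
  subst hv
  exact ⟨u, by simp⟩

lemma occursAt_of_suffix {T s : List ℕ} (h : T <:+ s) :
    occursAt T s (s.length - T.length) ∧ (s.length - T.length) + T.length = s.length := by
  obtain ⟨u, rfl⟩ := h
  refine ⟨⟨u, [], by simp, ?_⟩, ?_⟩ <;> simp [List.length_append]

lemma occursAt_append_right {T w : List ℕ} {p : ℕ} (h : occursAt T w p) (x : List ℕ) :
    occursAt T (w ++ x) p := by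
  obtain ⟨u, v, rfl, rfl⟩ := h
  exact ⟨u, v ++ x, by simp, rfl⟩

lemma occursAt_of_append_last {T w : List ℕ} {b p : ℕ}
    (h : occursAt T (w ++ [b]) p) (hp : p + T.length ≤ w.length) :
    occursAt T w p := by
  obtain ⟨u, v, heq, rfl⟩ := h
  rcases List.eq_nil_or_concat v with rfl | ⟨v', c, rfl⟩
  · exfalso
    have := congrArg List.length heq
    simp [List.length_append] at this
    omega
  · have heq' : w ++ [b] = (u ++ T ++ v') ++ [c] := by
      simpa [List.concat_eq_append, List.append_assoc] using heq
    obtain ⟨hw, -⟩ := List.append_inj' heq' (by simp)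
    exact ⟨u, v', by simpa using hw, rfl⟩

/-- Characterization of `U n` as compositions all of whose prohibited occurrences
are terminal. -/
lemma mem_union_iff_terminal (k : ℕ) (S : Fin k → List ℕ)
    (hincl : ∀ i j, i ≠ j → ¬ S i <:+: S j) (n : ℕ) (s : List ℕ) :
    (s ∈ ({t | (∀ p ∈ t, 0 < p) ∧ t.sum = n ∧ ∀ i, ¬ S i <:+: t} : Set (List ℕ)) ∪
        ⋃ i, {t | (∀ p ∈ t, 0 < p) ∧ t.sum = n ∧ QuasiAvoids S i t}) ↔
      ((∀ p ∈ s, 0 < p) ∧ s.sum = n ∧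
        ∀ j p, occursAt (S j) s p → p + (S j).length = s.length) := by
  constructor
  · rintro (⟨h1, h2, h3⟩ | hs)
    · refine ⟨h1, h2, fun j p hocc => ?_⟩
      exact absurd (infix_iff_occursAt.mpr ⟨p, hocc⟩) (h3 j)
    · simp only [Set.mem_iUnion, Set.mem_setOf_eq] at hs
      obtain ⟨i, h1, h2, hsuf, hq⟩ := hs
      refine ⟨h1, h2, fun j p hocc => ?_⟩
      obtain ⟨heq, hlen⟩ := hq j p hocc
      rw [heq]; exact hlen
  · rintro ⟨h1, h2, h3⟩
    by_cases hex : ∃ j p, occursAt (S j) s p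
    · obtain ⟨i, p, hocc⟩ := hex
      right
      simp only [Set.mem_iUnion, Set.mem_setOf_eq]
      have hsufi : S i <:+ s := suffix_of_occursAt hocc (h3 i p hocc)
      refine ⟨i, h1, h2, hsufi, fun j q hq => ?_⟩
      have hlenq := h3 j q hq
      have hsufj : S j <:+ s := suffix_of_occursAt hq hlenq
      have hji : S j = S i := by
        by_cases hij : j = i
        · rw [hij]
        · rcases List.suffix_or_suffix_of_suffix hsufj hsufi with h | h
          · exact absurd h.isInfix (hincl j i hij)
          · exact absurd h.isInfix (hincl i j (Ne.symm hij))
      refine ⟨hji, ?_⟩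
      rw [← hji]; exact hlenq
    · left
      push_neg at hex
      refine ⟨h1, h2, fun i hinf => ?_⟩
      obtain ⟨p, hp⟩ := infix_iff_occursAt.mp hinf
      exact hex i p hp

lemma incLast_concat (w : List ℕ) (a : ℕ) : incLast (w ++ [a]) = w ++ [a + 1] := by
  simp [incLast, List.dropLast_concat, List.getLastD_concat]

/-- Fix prohibited substrings `S₁, …, S_k` over the positive integers, none a substring of
another and each of length at least 2.  Let `A n` be the set of compositions of `n`
avoiding all `S i` and `B i n` the set of compositions of `n` quasi-avoiding `S i`, and
let `U n = A n ∪ B 1 n ∪ ⋯ ∪ B k n`.  For `n ≥ 1`, the map increasing the last part by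
one, together with the map appending a part `1` to an avoiding composition, is a
bijection from `U n ⊔ A n` onto `U (n+1)`. -/
theorem bijection_step
    (k : ℕ) (S : Fin k → List ℕ)
    (hlen : ∀ i, 2 ≤ (S i).length)
    (hpos : ∀ i, ∀ x ∈ S i, 0 < x)
    (hincl : ∀ i j, i ≠ j → ¬ S i <:+: S j)
    (A : ℕ → Set (List ℕ))
    (hA : ∀ n, A n = {s | (∀ p ∈ s, 0 < p) ∧ s.sum = n ∧ ∀ i, ¬ S i <:+: s})
    (B : Fin k → ℕ → Set (List ℕ))
    (hB : ∀ i n, B i n = {s | (∀ p ∈ s, 0 < p) ∧ s.sum = n ∧ QuasiAvoids S i s})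
    (U : ℕ → Set (List ℕ))
    (hU : ∀ n, U n = A n ∪ ⋃ i, B i n)
    (n : ℕ) (hn : 1 ≤ n) :
    U (n + 1) = incLast '' U n ∪ (fun s => s ++ [1]) '' A n ∧
      Set.InjOn incLast (U n) ∧
      Set.InjOn (fun s => s ++ [1]) (A n) ∧
      Disjoint (incLast '' U n) ((fun s => s ++ [1]) '' A n) := by
  -- characterization of U m
  have hUc : ∀ m s, s ∈ U m ↔ ((∀ p ∈ s, 0 < p) ∧ s.sum = m ∧
      ∀ j p, occursAt (S j) s p → p + (S j).length = s.length) := by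
    intro m s
    rw [hU, hA]
    simp only [hB]
    exact mem_union_iff_terminal k S hincl m s
  -- elements of U m with m ≥ 1 are nonempty
  have hne : ∀ m, 1 ≤ m → ∀ s ∈ U m, s ≠ [] := by
    intro m hm s hs hnil
    obtain ⟨-, h2, -⟩ := (hUc m s).mp hs
    subst hnil; simp at h2; omega
  refine ⟨?_, ?_, ?_, ?_⟩
  · -- the set equality
    ext t
    constructor
    · intro ht
      obtain ⟨h1, h2, h3⟩ := (hUc (n + 1) t).mp ht
      have htne : t ≠ [] := hne (n + 1) (by omega) t ht
      obtain ⟨w, a, rfl⟩ := (List.eq_nil_or_concat t).resolve_left htne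
      simp only [List.concat_eq_append] at *
      have ha : 0 < a := h1 a (by simp)
      have hsum : w.sum + a = n + 1 := by simpa using h2
      by_cases ha1 : a = 1
      · -- comes from appending 1 to an avoiding composition
        right
        subst ha1
        refine ⟨w, ?_, rfl⟩
        rw [hA]
        refine ⟨fun p hp => h1 p (by simp [hp]), by omega, fun i hinf => ?_⟩
        obtain ⟨p, hp⟩ := infix_iff_occursAt.mp hinf
        have hA1 := h3 i p (occursAt_append_right hp [1])
        have hA2 := occursAt_length hp
        simp only [List.length_append, List.length_singleton] at hA1
        omega
      · -- comes from incrementing the last part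
        left
        refine ⟨w ++ [a - 1], ?_, ?_⟩
        · rw [hUc]
          refine ⟨fun p hp => ?_, by simp; omega, fun j p hocc => ?_⟩
          · simp at hp
            rcases hp with hp | hp
            · exact h1 p (by simp [hp])
            · omega
          · have hle := occursAt_length hocc
            simp [List.length_append] at hle ⊢
            by_cases hc : p + (S j).length ≤ w.length
            · exfalso
              have hocc' := occursAt_of_append_last hocc hc
              have := h3 j p (occursAt_append_right hocc' [a])
              simp [List.length_append] at this
              omega
            · omega
        · rw [incLast_concat]
          congr 2
          omega
    · rintro (⟨s, hs, rfl⟩ | ⟨s, hs, rfl⟩)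
      · -- image of incLast
        obtain ⟨h1, h2, h3⟩ := (hUc n s).mp hs
        have hsne : s ≠ [] := hne n hn s hs
        obtain ⟨w, a, rfl⟩ := (List.eq_nil_or_concat s).resolve_left hsne
        simp only [List.concat_eq_append] at *
        rw [incLast_concat, hUc]
        refine ⟨fun p hp => ?_, by simp at h2 ⊢; omega, fun j p hocc => ?_⟩
        · simp at hp
          rcases hp with hp | hp
          · exact h1 p (by simp [hp])
          · omega
        · have hle := occursAt_length hocc
          simp [List.length_append] at hle ⊢
          by_cases hc : p + (S j).length ≤ w.length
          · exfalso
            have hocc' := occursAt_of_append_last hocc hc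
            have := h3 j p (occursAt_append_right hocc' [a])
            simp [List.length_append] at this
            omega
          · omega
      · -- image of appending 1
        rw [hA] at hs
        obtain ⟨h1, h2, h3⟩ := hs
        rw [hUc]
        refine ⟨fun p hp => ?_, by simp [h2], fun j p hocc => ?_⟩
        · simp at hp
          rcases hp with hp | hp
          · exact h1 p hp
          · omega
        · have hle := occursAt_length hocc
          simp [List.length_append] at hle ⊢
          by_cases hc : p + (S j).length ≤ s.length
          · exact absurd (infix_iff_occursAt.mpr ⟨p, occursAt_of_append_last hocc hc⟩) (h3 j)
          · omega
  · -- InjOn incLast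
    intro s hs s' hs' heq
    obtain ⟨w, a, rfl⟩ := (List.eq_nil_or_concat s).resolve_left (hne n hn s hs)
    obtain ⟨w', a', rfl⟩ := (List.eq_nil_or_concat s').resolve_left (hne n hn s' hs')
    simp only [List.concat_eq_append] at *
    rw [incLast_concat, incLast_concat] at heq
    obtain ⟨hw, hab⟩ := List.append_inj' heq (by simp)
    simp at hab
    rw [hw, hab]
  · -- InjOn append [1]
    intro s _ s' _ heq
    simpa using List.append_cancel_right (heq : s ++ [1] = s' ++ [1])
  · -- Disjointness
    rw [Set.disjoint_left]
    rintro t ⟨s, hs, rfl⟩ ⟨s', -, heq⟩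
    obtain ⟨w, a, rfl⟩ := (List.eq_nil_or_concat s).resolve_left (hne n hn s hs)
    simp only [List.concat_eq_append] at *
    obtain ⟨h1, -, -⟩ := (hUc n _).mp hs
    have ha : 0 < a := h1 a (by simp)
    rw [incLast_concat] at heq
    have := congrArg (fun l => List.getLastD l 0) heq
    simp [List.getLastD_concat] at this
    omega
end

section
/- Let f(n,m) denote the number of compositions of n into exactly m positive parts avoiding both substrings 22 and 212. Then the bivariate generating function Σ_{n,m} f(n,m) x^n q^m equals (1−x)(1 − xq + x²q(1 − (xq)²)) / [ (1 − x(1+q) + (1−x)x²q)(1 − xq + x²q(1 − (xq)²)) − (1−x)(1−xq)x²q ], as an identity of formal power series in x and q. -/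
/-!
Reading a composition from left to right, a three-state automaton remembers the longest suffix
of the parts read so far that is a proper prefix of `22` or `212` (namely `[]`, `2` or `21`) and
rejects as soon as a pattern is completed; its language is exactly the set of avoiding
compositions. Splitting off the first part gives, for the bivariate generating functions
`A, B, C` of the words accepted from the three states, the linear system
`A = 1 + q(x/(1-x) A + x²(B - A))`, `B = 1 + q(x/(1-x) A + x(C - A) - x² A)`,
`C = 1 + q(x/(1-x) A - x² A)`, and eliminating `B` and `C` yields the rational function.
-/

open MvPowerSeries

section Bidegree

variable {R : Type*} [Semiring R]

noncomputable def bidegree (n m : ℕ) : Fin 2 →₀ ℕ := Finsupp.single 0 n + Finsupp.single 1 m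

@[simp] theorem bidegree_apply_zero (n m : ℕ) : bidegree n m 0 = n := by simp [bidegree]

@[simp] theorem bidegree_apply_one (n m : ℕ) : bidegree n m 1 = m := by simp [bidegree]

theorem bidegree_eta (d : Fin 2 →₀ ℕ) : bidegree (d 0) (d 1) = d := by
  ext i; fin_cases i <;> simp

theorem MvPowerSeries.ext_bidegree {F G : MvPowerSeries (Fin 2) R}
    (h : ∀ n m, coeff (bidegree n m) F = coeff (bidegree n m) G) : F = G := by
  ext d; rw [← bidegree_eta d]; exact h _ _

theorem coeff_bidegree_one (n m : ℕ) :
    coeff (bidegree n m) (1 : MvPowerSeries (Fin 2) R) = if n = 0 ∧ m = 0 then 1 else 0 := by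
  classical
  rw [coeff_one]
  simp [Finsupp.ext_iff, Fin.forall_fin_two]

theorem coeff_bidegree_monomial_mul (a b n m : ℕ) (F : MvPowerSeries (Fin 2) R) :
    coeff (bidegree n m) (monomial (bidegree a b) 1 * F) =
      if a ≤ n ∧ b ≤ m then coeff (bidegree (n - a) (m - b)) F else 0 := by
  rw [coeff_monomial_mul, one_mul]
  have hle : bidegree a b ≤ bidegree n m ↔ a ≤ n ∧ b ≤ m := by
    simp [Finsupp.le_def, Fin.forall_fin_two]
  have hsub : bidegree n m - bidegree a b = bidegree (n - a) (m - b) := by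
    ext i; fin_cases i <;> simp
  simp only [hle, hsub]

theorem coeff_bidegree_X_zero_pow_mul (a n m : ℕ) (F : MvPowerSeries (Fin 2) R) :
    coeff (bidegree n m) (X 0 ^ a * F) = if a ≤ n then coeff (bidegree (n - a) m) F else 0 := by
  have : (X 0 ^ a : MvPowerSeries (Fin 2) R) = monomial (bidegree a 0) 1 := by
    rw [X_pow_eq, bidegree, Finsupp.single_zero, add_zero]
  simp [this, coeff_bidegree_monomial_mul]

theorem coeff_bidegree_X_one_mul (n m : ℕ) (F : MvPowerSeries (Fin 2) R) :
    coeff (bidegree n m) (X 1 * F) = if 1 ≤ m then coeff (bidegree n (m - 1)) F else 0 := by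
  have : (X 1 : MvPowerSeries (Fin 2) R) = monomial (bidegree 0 1) 1 := by
    rw [X, bidegree, Finsupp.single_zero, zero_add]
  simp [this, coeff_bidegree_monomial_mul]

end Bidegree

def compositionSet (P : List ℕ → Prop) (n m : ℕ) : Set (List ℕ) :=
  {s | (∀ p ∈ s, 0 < p) ∧ s.sum = n ∧ s.length = m ∧ P s}

theorem ncard_compositionSet_zero {P : List ℕ → Prop} (hP : P []) (n : ℕ) :
    (compositionSet P n 0).ncard = if n = 0 then 1 else 0 := by
  have : compositionSet P n 0 = if n = 0 then {[]} else ∅ := by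
    ext s
    simp only [compositionSet, Set.mem_ofPred_eq, List.length_eq_zero_iff]
    split_ifs with h <;> constructor
    · rintro ⟨-, -, rfl, -⟩; rfl
    · rintro rfl; simpa [h] using hP
    · rintro ⟨-, rfl, rfl, -⟩; exact h rfl
    · exact False.elim
  split_ifs at this ⊢ <;> simp [this]

section CompositionSet

variable (P : List ℕ → Prop) (n m : ℕ)

theorem compositionSet_finite : (compositionSet P n m).Finite :=
  (Set.finite_range (Composition.blocks (n := n))).subset
    fun s ⟨hpos, hsum, _⟩ => ⟨⟨s, fun h => hpos _ h, hsum⟩, rfl⟩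

theorem compositionSet_succ : compositionSet P n (m + 1) =
    ⋃ a ∈ Set.Icc 1 n, List.cons a '' compositionSet (fun t => P (a :: t)) (n - a) m := by
  ext s
  simp only [compositionSet, Set.mem_iUnion, Set.mem_image, Set.mem_ofPred_eq, Set.mem_Icc]
  constructor
  · rintro ⟨hpos, hsum, hlen, hP⟩
    obtain ⟨a, t, rfl⟩ := List.exists_cons_of_length_eq_add_one hlen
    simp only [List.mem_cons, forall_eq_or_imp, List.sum_cons, List.length_cons] at hpos hsum hlen
    exact ⟨a, ⟨hpos.1, by omega⟩, t, ⟨hpos.2, by omega, by omega, hP⟩, rfl⟩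
  · rintro ⟨a, ⟨ha, han⟩, t, ⟨hpos, hsum, hlen, hP⟩, rfl⟩
    simp only [List.mem_cons, forall_eq_or_imp, List.sum_cons, List.length_cons]
    exact ⟨⟨ha, hpos⟩, by omega, by omega, hP⟩

theorem ncard_compositionSet_succ : (compositionSet P n (m + 1)).ncard =
    ∑ a ∈ Finset.Icc 1 n, (compositionSet (fun t => P (a :: t)) (n - a) m).ncard := by
  rw [compositionSet_succ, ← Finset.coe_Icc, (Finset.finite_toSet _).ncard_biUnion,
    finsum_mem_coe_finset]
  · exact Finset.sum_congr rfl fun a _ => Set.ncard_image_of_injective _ List.cons_injective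
  · exact fun a _ => (compositionSet_finite _ _ _).image _
  · intro a _ b _ hab
    exact Set.disjoint_left.2 fun _ ⟨_, _, ha⟩ ⟨_, _, hb⟩ =>
      hab (List.cons_eq_cons.1 (hb.trans ha.symm)).1.symm

end CompositionSet

theorem Finset.sum_Icc_one_sub_eq_sum_range {M : Type*} [AddCommMonoid M] (g : ℕ → M)
    (n : ℕ) :
    ∑ a ∈ Finset.Icc 1 n, g (n - a) = ∑ k ∈ Finset.range n, g k := by
  rw [← Finset.Ico_add_one_right_eq_Icc, Finset.sum_Ico_eq_sum_range,
    ← Finset.sum_range_reflect]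
  exact Finset.sum_congr rfl fun k hk => congrArg g (by simp only [Finset.mem_range] at hk; omega)

theorem coeff_bidegree_X_zero_mul_inv_mul {K : Type*} [Field K] (n m : ℕ)
    (F : MvPowerSeries (Fin 2) K) :
    coeff (bidegree n m) (X 0 * (1 - X 0)⁻¹ * F) =
      ∑ k ∈ Finset.range n, coeff (bidegree k m) F := by
  have hrec : X 0 * (1 - X 0)⁻¹ * F = X 0 ^ 1 * F + X 0 ^ 1 * (X 0 * (1 - X 0)⁻¹ * F) := by
    have := MvPowerSeries.mul_inv_cancel (1 - X 0 : MvPowerSeries (Fin 2) K) (by simp)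
    linear_combination (X 0 * F) * this
  induction n with
  | zero => rw [hrec, map_add, coeff_bidegree_X_zero_pow_mul, coeff_bidegree_X_zero_pow_mul]; simp
  | succ n ih =>
    rw [hrec, map_add, coeff_bidegree_X_zero_pow_mul, coeff_bidegree_X_zero_pow_mul]
    simp [ih, Finset.sum_range_succ, add_comm]

noncomputable def compositionGF (P : List ℕ → Prop) : MvPowerSeries (Fin 2) ℚ :=
  fun d => (compositionSet P (d 0) (d 1)).ncard

@[simp] theorem coeff_bidegree_compositionGF (P : List ℕ → Prop) (n m : ℕ) :
    coeff (bidegree n m) (compositionGF P) = (compositionSet P n m).ncard := by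
  simp [compositionGF, coeff_apply]

theorem compositionGF_eq_of_cons_iff {P Q : List ℕ → Prop} (hP : P []) (N : ℕ)
    (hQ : ∀ a, N < a → ∀ t, P (a :: t) ↔ Q t) :
    compositionGF P = 1 + X 1 * (X 0 * (1 - X 0)⁻¹ * compositionGF Q + ∑ a ∈ Finset.Icc 1 N,
      X 0 ^ a * (compositionGF (fun t => P (a :: t)) - compositionGF Q)) := by
  refine MvPowerSeries.ext_bidegree fun n m => ?_
  rcases m with _ | m
  · simp [ncard_compositionSet_zero hP, coeff_bidegree_one, coeff_bidegree_X_one_mul]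
  set δ : ℕ → ℚ := fun a =>
    (compositionSet (fun t => P (a :: t)) (n - a) m).ncard - (compositionSet Q (n - a) m).ncard
  have hδ :
      ∑ a ∈ Finset.Icc 1 n, δ a = ∑ a ∈ Finset.Icc 1 N, if a ≤ n then δ a else 0 := by
    rw [← Finset.sum_filter]
    refine (Finset.sum_subset (fun a => ?_) fun a ha hN => ?_).symm
    · simp only [Finset.mem_filter, Finset.mem_Icc]; omega
    · have : N < a := by
        simp only [Finset.mem_Icc, Finset.mem_filter, not_and, not_le] at ha hN; omega
      simp only [δ, compositionSet, hQ a this, sub_self]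
  simp only [ncard_compositionSet_succ, coeff_bidegree_one, coeff_bidegree_X_one_mul, map_add,
    map_sum, coeff_bidegree_X_zero_mul_inv_mul, coeff_bidegree_X_zero_pow_mul, map_sub,
    coeff_bidegree_compositionGF, Nat.cast_sum]
  rw [if_neg (by omega), if_pos (by omega), Nat.add_sub_cancel, zero_add, ← hδ,
    ← Finset.sum_Icc_one_sub_eq_sum_range fun k => ((compositionSet Q k m).ncard : ℚ),
    ← Finset.sum_add_distrib]
  exact Finset.sum_congr rfl fun a _ => by simp [δ]

namespace Avoid22And212

def Avoids (s : List ℕ) : Prop := ¬ [2, 2] <:+: s ∧ ¬ [2, 1, 2] <:+: s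

theorem avoids_cons_iff (a : ℕ) (s : List ℕ) :
    Avoids (a :: s) ↔ ¬ [2, 2] <+: a :: s ∧ ¬ [2, 1, 2] <+: a :: s ∧ Avoids s := by
  simp only [Avoids, List.infix_cons_iff]
  tauto

inductive State
  | empty
  | two
  | twoOne

namespace State

def word : State → List ℕ
  | empty => []
  | two => [2]
  | twoOne => [2, 1]

def next : State → ℕ → Option State
  | empty, a => if a = 2 then some two else some empty
  | two, a => if a = 2 then none else if a = 1 then some twoOne else some empty
  | twoOne, a => if a = 2 then none else some empty

end State

def Accepts : Option State → List ℕ → Prop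
  | none, _ => False
  | some _, [] => True
  | some q, a :: t => Accepts (q.next a) t

theorem accepts_some_iff (q : State) (s : List ℕ) :
    Accepts (some q) s ↔ Avoids (q.word ++ s) := by
  induction s generalizing q with
  | nil => cases q <;> simp only [Accepts, State.word, Avoids, List.append_nil] <;> decide
  | cons a t ih =>
    cases q <;> by_cases h2 : a = 2 <;> by_cases h1 : a = 1 <;> subst_vars <;>
      simp_all [Accepts, State.next, State.word, avoids_cons_iff, Ne.symm]

theorem compositionGF_accepts_none : compositionGF (Accepts none) = 0 :=
  MvPowerSeries.ext_bidegree fun n m => by simp [compositionSet, Accepts]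

theorem compositionGF_accepts_some (q : State) :
    compositionGF (Accepts (some q)) =
      1 + X 1 * (X 0 * (1 - X 0)⁻¹ * compositionGF (Accepts (some .empty)) +
        ∑ a ∈ Finset.Icc 1 2,
          X 0 ^ a * (compositionGF (Accepts (q.next a)) - compositionGF (Accepts (some .empty)))) :=
  compositionGF_eq_of_cons_iff trivial 2 fun a ha t => by
    cases q <;> simp [Accepts, State.next, show a ≠ 1 by omega, show a ≠ 2 by omega]

theorem compositionGF_accepts_empty :
    ((1 - X 0) - X 0 * X 1 + (1 - X 0) * X 0 ^ 2 * X 1 - X 0 ^ 5 * X 1 ^ 2 - X 0 ^ 4 * X 1 ^ 3 +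
        (1 - X 0) * X 0 ^ 5 * X 1 ^ 3) * compositionGF (Accepts (some .empty)) =
      (1 - X 0) * (1 + X 0 ^ 2 * X 1 + X 0 ^ 3 * X 1 ^ 2) := by
  have hE := compositionGF_accepts_some .empty
  have hT := compositionGF_accepts_some .two
  have hO := compositionGF_accepts_some .twoOne
  simp only [show Finset.Icc 1 2 = {1, 2} from rfl, Finset.sum_pair (by norm_num : (1 : ℕ) ≠ 2),
    State.next] at hE hT hO
  simp only [OfNat.ofNat_ne_one, OfNat.one_ne_ofNat, if_true, if_false,
    compositionGF_accepts_none] at hE hT hO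
  have hinv := MvPowerSeries.mul_inv_cancel (1 - X 0 : MvPowerSeries (Fin 2) ℚ) (by simp)
  set x : MvPowerSeries (Fin 2) ℚ := X 0
  set y : MvPowerSeries (Fin 2) ℚ := X 1
  set A := compositionGF (Accepts (some .empty))
  -- `hinv` clears the denominator `1 - x` after `B` and `C` are eliminated.
  linear_combination (1 - x) * hE + (1 - x) * x ^ 2 * y * hT + (1 - x) * x ^ 3 * y ^ 2 * hO +
    x * y * A * (1 + x ^ 2 * y + x ^ 3 * y ^ 2) * hinv

end Avoid22And212

open Avoid22And212

/-- Let `f n m` be the number of compositions of `n` into exactly `m` positive parts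
avoiding both substrings `22` and `212`.  The bivariate generating function
`Σ f(n,m) x^n q^m` (with `x = X 0`, `q = X 1`) equals
`(1-x)(1 - xq + x²q(1 - (xq)²)) /
 [(1 - x(1+q) + (1-x)x²q)(1 - xq + x²q(1 - (xq)²)) - (1-x)(1-xq)x²q]`;
equivalently, the product of the generating function with the denominator equals the
numerator as formal power series. -/
theorem gf_avoid_22_212
    (f : ℕ → ℕ → ℕ)
    (hf : ∀ n m, f n m = Set.ncard {s : List ℕ | (∀ p ∈ s, 0 < p) ∧ s.sum = n ∧
      s.length = m ∧ ¬ [2, 2] <:+: s ∧ ¬ [2, 1, 2] <:+: s})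
    (G : MvPowerSeries (Fin 2) ℚ)
    (hG : ∀ d : Fin 2 →₀ ℕ, MvPowerSeries.coeff d G = f (d 0) (d 1)) :
    G * ((1 - X 0 * (1 + X 1) + (1 - X 0) * X 0 ^ 2 * X 1) *
          (1 - X 0 * X 1 + X 0 ^ 2 * X 1 * (1 - (X 0 * X 1) ^ 2)) -
        (1 - X 0) * (1 - X 0 * X 1) * X 0 ^ 2 * X 1) =
      (1 - X 0) * (1 - X 0 * X 1 + X 0 ^ 2 * X 1 * (1 - (X 0 * X 1) ^ 2)) := by
  have hGA : G = compositionGF (Accepts (some .empty)) := by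
    refine MvPowerSeries.ext_bidegree fun n m => ?_
    rw [hG, hf, coeff_bidegree_compositionGF, bidegree_apply_zero, bidegree_apply_one]
    congr 3
    ext s
    simp [accepts_some_iff, State.word, Avoids]
  have hunit : IsUnit ((1 - X 0) - X 0 * X 1 + (1 - X 0) * X 0 ^ 2 * X 1 - X 0 ^ 5 * X 1 ^ 2 -
      X 0 ^ 4 * X 1 ^ 3 + (1 - X 0) * X 0 ^ 5 * X 1 ^ 3 : MvPowerSeries (Fin 2) ℚ) :=
    isUnit_iff_constantCoeff.2 (by simp)
  refine hunit.mul_left_cancel ?_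
  rw [hGA]
  -- The stated fraction equals the one of `compositionGF_accepts_empty` by cross-multiplication.
  linear_combination ((1 - X 0 * (1 + X 1) + (1 - X 0) * X 0 ^ 2 * X 1) *
      (1 - X 0 * X 1 + X 0 ^ 2 * X 1 * (1 - (X 0 * X 1) ^ 2)) -
    (1 - X 0) * (1 - X 0 * X 1) * X 0 ^ 2 * X 1) * compositionGF_accepts_empty
end

section
/- The number of compositions of n into positive parts avoiding the single substring 22 satisfies: the generating function Σ_σ x^{w(σ)} q^{ℓ(σ)} over all such compositions equals (1−x)(1 + x²q) / [ (1 − x(1+q) + (1−x)x²q)(1 + x²q) − (1−x)x²q ]. -/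
/-!
Encode a set `S` of compositions by its generating function `Σ_{s ∈ S} x^{w(s)} q^{ℓ(s)}`.
Prepending a part `p` multiplies it by `x^p q`, and raising the first part by one multiplies
it by `x`. Splitting by the first part, with `A` counting all 22-avoiding compositions, `B` those
not starting with `2` and `C` those starting with a part `≥ 3`, gives
`A = (1 + x²q) B`, `B = 1 + xq A + C` and `C = x C + x³q A`;
eliminating `B` and `C` yields the stated identity.
-/

open MvPowerSeries

namespace Avoid22

noncomputable def weight (s : List ℕ) : Fin 2 →₀ ℕ :=
  Finsupp.single 0 s.sum + Finsupp.single 1 s.length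

lemma weight_eq_iff {s : List ℕ} {d : Fin 2 →₀ ℕ} :
    weight s = d ↔ s.sum = d 0 ∧ s.length = d 1 := by
  simp [weight, Finsupp.ext_iff, Fin.forall_fin_two, eq_comm]

lemma weight_cons (p : ℕ) (s : List ℕ) :
    weight (p :: s) = weight s + (Finsupp.single 0 p + Finsupp.single 1 1) := by
  simp only [weight, List.sum_cons, List.length_cons, Finsupp.single_add]
  abel

lemma weight_modifyHead_succ {s : List ℕ} (hs : s ≠ []) :
    weight (s.modifyHead (· + 1)) = weight s + Finsupp.single 0 1 := by
  obtain ⟨p, s, rfl⟩ := List.exists_cons_of_ne_nil hs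
  simp only [weight, List.modifyHead_cons, List.sum_cons, List.length_cons, Finsupp.single_add]
  abel

lemma finite_weight_preimage (d : Fin 2 →₀ ℕ) : (weight ⁻¹' {d}).Finite := by
  refine ((List.finite_length_eq (Fin (d 0 + 1)) (d 1)).image (List.map Fin.val)).subset ?_
  intro s hs
  rw [Set.mem_preimage, Set.mem_singleton_iff, weight_eq_iff] at hs
  refine ⟨s.map (Fin.ofNat (d 0 + 1)), by simpa using hs.2, ?_⟩
  rw [List.map_map, List.map_congr_left, List.map_id]
  intro p hp
  have : p ≤ d 0 := hs.1 ▸ List.le_sum_of_mem hp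
  simp [Nat.mod_eq_of_lt (Nat.lt_succ_of_le this)]

noncomputable def genFun (S : Set (List ℕ)) : MvPowerSeries (Fin 2) ℚ :=
  fun d => (S ∩ weight ⁻¹' {d}).ncard

lemma coeff_genFun (S : Set (List ℕ)) (d : Fin 2 →₀ ℕ) :
    coeff d (genFun S) = (S ∩ weight ⁻¹' {d}).ncard := rfl

lemma genFun_singleton_nil : genFun {[]} = 1 := by
  ext d
  rw [coeff_genFun, coeff_one]
  have : weight [] = 0 := by simp [weight]
  split_ifs with hd
  · rw [Set.singleton_inter_of_mem (by simp [this, hd]), Set.ncard_singleton, Nat.cast_one]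
  · rw [Set.singleton_inter_of_notMem (by simp [this, Ne.symm hd]), Set.ncard_empty,
      Nat.cast_zero]

lemma genFun_union {S T : Set (List ℕ)} (h : Disjoint S T) :
    genFun (S ∪ T) = genFun S + genFun T := by
  ext d
  rw [map_add, coeff_genFun, coeff_genFun, coeff_genFun, Set.union_inter_distrib_right,
    Set.ncard_union_eq (h.mono Set.inter_subset_left Set.inter_subset_left)
      ((finite_weight_preimage d).inter_of_right S) ((finite_weight_preimage d).inter_of_right T),
    Nat.cast_add]

lemma genFun_image {f : List ℕ → List ℕ} {S : Set (List ℕ)} (hf : S.InjOn f)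
    (e : Fin 2 →₀ ℕ) (hw : ∀ s ∈ S, weight (f s) = weight s + e) :
    genFun (f '' S) = monomial e 1 * genFun S := by
  ext d
  rw [coeff_monomial_mul, one_mul, coeff_genFun, coeff_genFun]
  split_ifs with he
  · have : f '' S ∩ weight ⁻¹' {d} = f '' (S ∩ weight ⁻¹' {d - e}) := by
      ext s
      simp only [Set.mem_inter_iff, Set.mem_image, Set.mem_preimage, Set.mem_singleton_iff]
      constructor
      · rintro ⟨⟨t, ht, rfl⟩, hd⟩
        exact ⟨t, ⟨ht, eq_tsub_of_add_eq (hw t ht ▸ hd)⟩, rfl⟩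
      · rintro ⟨t, ⟨ht, hd⟩, rfl⟩
        exact ⟨⟨t, ht, rfl⟩, by rw [hw t ht, hd, tsub_add_cancel_of_le he]⟩
    rw [this, (hf.mono Set.inter_subset_left).ncard_image]
  · have : f '' S ∩ weight ⁻¹' {d} = ∅ := by
      rw [Set.eq_empty_iff_forall_notMem]
      rintro _ ⟨⟨t, ht, rfl⟩, hd⟩
      exact he (hd ▸ hw t ht ▸ le_add_self)
    rw [this, Set.ncard_empty, Nat.cast_zero]

lemma genFun_image_cons (p : ℕ) (S : Set (List ℕ)) :
    genFun ((p :: ·) '' S) = X 0 ^ p * X 1 * genFun S := by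
  rw [genFun_image List.cons_injective.injOn _ fun s _ => weight_cons p s, X_pow_eq, X,
    monomial_mul_monomial, one_mul]

lemma genFun_image_modifyHead_succ {S : Set (List ℕ)} (hS : [] ∉ S) :
    genFun (List.modifyHead (· + 1) '' S) = X 0 * genFun S := by
  refine genFun_image ?_ _ fun s hs => weight_modifyHead_succ (ne_of_mem_of_not_mem hs hS)
  rintro (_ | ⟨p, s⟩) - (_ | ⟨q, t⟩) - h <;> simp_all

def avoid22 : Set (List ℕ) := {s | (∀ p ∈ s, 0 < p) ∧ ¬ [2, 2] <:+: s}

/-- As `[].headD 0 = 0`, the empty composition lies in `headNeTwo` but not in `headGeThree`. -/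
def headNeTwo : Set (List ℕ) := {s ∈ avoid22 | s.headD 0 ≠ 2}

def headGeThree : Set (List ℕ) := {s ∈ avoid22 | 3 ≤ s.headD 0}

lemma infix_two_two_cons {p : ℕ} {s : List ℕ} :
    [2, 2] <:+: p :: s ↔ (p = 2 ∧ s.headD 0 = 2) ∨ [2, 2] <:+: s := by
  rw [List.infix_cons_iff]
  cases s with
  | nil => simp
  | cons q s => simp [@eq_comm _ 2]

@[simp] lemma nil_mem_avoid22 : [] ∈ avoid22 := by simp [avoid22]

@[simp] lemma cons_mem_avoid22 {p : ℕ} {s : List ℕ} :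
    p :: s ∈ avoid22 ↔ 0 < p ∧ s ∈ avoid22 ∧ ¬ (p = 2 ∧ s.headD 0 = 2) := by
  simp only [avoid22, Set.mem_ofPred_eq, List.forall_mem_cons, infix_two_two_cons]
  tauto

lemma avoid22_eq : avoid22 = headNeTwo ∪ (2 :: ·) '' headNeTwo := by
  ext (_ | ⟨p, s⟩) <;> simp [headNeTwo]; grind

lemma headNeTwo_eq : headNeTwo = {[]} ∪ (1 :: ·) '' avoid22 ∪ headGeThree := by
  ext (_ | ⟨p, s⟩) <;> simp [headNeTwo, headGeThree]; grind

lemma headGeThree_eq :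
    headGeThree = (3 :: ·) '' avoid22 ∪ List.modifyHead (· + 1) '' headGeThree := by
  ext (_ | ⟨p, s⟩)
  · simp [headGeThree]
  simp only [headGeThree, Set.mem_union, Set.mem_image, Set.mem_sep_iff, List.headD_cons,
    List.cons.injEq]
  constructor
  · rintro ⟨hs, hp⟩
    obtain rfl | hp := hp.eq_or_lt
    · exact .inl ⟨s, by simp_all⟩
    · exact .inr ⟨(p - 1) :: s, by simp_all; omega⟩
  · rintro (⟨t, ht, rfl, rfl⟩ | ⟨_ | ⟨q, t⟩, ⟨ht, hq⟩, h⟩)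
    · simp_all
    · simp at h
    · simp_all
      grind

lemma nil_notMem_headGeThree : [] ∉ headGeThree := by simp [headGeThree]

lemma genFun_avoid22 : genFun avoid22 = (1 + X 0 ^ 2 * X 1) * genFun headNeTwo := by
  have hdisj : Disjoint headNeTwo ((2 :: ·) '' headNeTwo) :=
    Set.disjoint_left.2 fun _ hs ⟨_, _, ht⟩ => hs.2 (ht ▸ rfl)
  rw [avoid22_eq, genFun_union hdisj, genFun_image_cons]
  ring

lemma genFun_headNeTwo :
    genFun headNeTwo = 1 + X 0 * X 1 * genFun avoid22 + genFun headGeThree := by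
  have hdisj₁ : Disjoint {[]} ((1 :: ·) '' avoid22) := by simp
  have hdisj₂ : Disjoint ({[]} ∪ (1 :: ·) '' avoid22) headGeThree := by
    refine Set.disjoint_union_left.2 ⟨by simpa using nil_notMem_headGeThree, ?_⟩
    exact Set.disjoint_left.2 fun _ ⟨_, _, ht⟩ hs => by subst ht; simpa using hs.2
  rw [headNeTwo_eq, genFun_union hdisj₂, genFun_union hdisj₁, genFun_singleton_nil,
    genFun_image_cons, pow_one]

lemma genFun_headGeThree :
    genFun headGeThree = X 0 * genFun headGeThree + X 0 ^ 3 * X 1 * genFun avoid22 := by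
  have hdisj : Disjoint ((3 :: ·) '' avoid22) (List.modifyHead (· + 1) '' headGeThree) := by
    refine Set.disjoint_left.2 ?_
    rintro _ ⟨t, -, rfl⟩ ⟨_ | ⟨q, u⟩, ⟨-, hq⟩, h⟩
    · simp at h
    · simp only [List.headD_cons] at hq
      simp only [List.modifyHead_cons, List.cons.injEq] at h
      omega
  conv_lhs => rw [headGeThree_eq]
  rw [genFun_union hdisj, genFun_image_cons, genFun_image_modifyHead_succ nil_notMem_headGeThree]
  ring

end Avoid22

open Avoid22 in
/-- The generating function `Σ_σ x^{w(σ)} q^{ℓ(σ)}` over compositions into positive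
parts avoiding the single substring `22` (with `x = X 0`, `q = X 1`) equals
`(1-x)(1 + x²q) / [(1 - x(1+q) + (1-x)x²q)(1 + x²q) - (1-x)x²q]`; equivalently, the
product of the generating function with the denominator equals the numerator as formal
power series. -/
theorem gf_avoid_22
    (G : MvPowerSeries (Fin 2) ℚ)
    (hG : ∀ d : Fin 2 →₀ ℕ, MvPowerSeries.coeff d G =
      Set.ncard {s : List ℕ | (∀ p ∈ s, 0 < p) ∧ s.sum = d 0 ∧ s.length = d 1 ∧
        ¬ [2, 2] <:+: s}) :
    G * ((1 - X 0 * (1 + X 1) + (1 - X 0) * X 0 ^ 2 * X 1) * (1 + X 0 ^ 2 * X 1) -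
        (1 - X 0) * X 0 ^ 2 * X 1) =
      (1 - X 0) * (1 + X 0 ^ 2 * X 1) := by
  obtain rfl : G = genFun avoid22 := by
    ext d
    rw [hG, coeff_genFun]
    congr 2
    ext s
    simp only [avoid22, weight_eq_iff, Set.mem_inter_iff, Set.mem_preimage,
      Set.mem_singleton_iff, Set.mem_ofPred_eq]
    tauto
  linear_combination (1 - X 0) * genFun_avoid22 +
    (1 + X 0 ^ 2 * X 1) * ((1 - X 0) * genFun_headNeTwo + genFun_headGeThree)
end
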